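/- Let M be an infinite matrix with no vanishing columns and p ≥ 1. Then the Banach space (ℓ^p_M, ‖·‖_{M,p}) is separable. -/

import Mathlib

/-!
A vector `x` of finite `‖·‖_{M,p}`-norm is the limit of its truncations `∑_{k<N} x_k e_k`: apply
dominated convergence to the inner sums and then to the outer `ℓᵖ`-sum. A truncation is in turn
approximated by `∑_{k<N} c_k e_k` with `c_k` from a countable dense subset of `ℂ` containing `0`,
since `‖c e_k‖_{M,p} = |c| ‖M e_k‖_p`. As `|x_k| ‖M e_k‖_p ≤ ‖x‖_{M,p}`, a column of infinite
`ℓᵖ`-norm forces `x_k = 0`, which the coefficient `0` approximates exactly.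
-/

open scoped ENNReal NNReal

noncomputable def eNorm (m : ℕ → ℕ → ℂ) (p : ℝ) (x : ℕ → ℂ) : ℝ≥0∞ :=
  (∑' n : ℕ, (∑' k : ℕ, (‖m n k‖₊ : ℝ≥0∞) * (‖x k‖₊ : ℝ≥0∞)) ^ p) ^ (1 / p)

open Filter Topology MeasureTheory

namespace ENNReal

theorem Lp_add_le_tsum {ι : Type*} {p : ℝ} (hp : 1 ≤ p) (f g : ι → ℝ≥0∞) :
    (∑' i, (f i + g i) ^ p) ^ (1 / p) ≤
      (∑' i, f i ^ p) ^ (1 / p) + (∑' i, g i ^ p) ^ (1 / p) := by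
  let _ : MeasurableSpace ι := ⊤
  simpa only [lintegral_count, Pi.add_apply] using
    lintegral_Lp_add_le (μ := Measure.count) (measurable_from_top (f := f)).aemeasurable
      (measurable_from_top (f := g)).aemeasurable hp

theorem tendsto_tsum_of_dominated_convergence {α ι : Type*} {l : Filter ι}
    [l.IsCountablyGenerated] {F : ι → α → ℝ≥0∞} {f bound : α → ℝ≥0∞}
    (h_bound : ∀ i a, F i a ≤ bound a) (h_fin : ∑' a, bound a ≠ ∞)
    (h_lim : ∀ a, Tendsto (F · a) l (𝓝 (f a))) :
    Tendsto (fun i => ∑' a, F i a) l (𝓝 (∑' a, f a)) := by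
  let _ : MeasurableSpace α := ⊤
  simpa only [lintegral_count] using
    tendsto_lintegral_filter_of_dominated_convergence (μ := Measure.count) bound
      (.of_forall fun _ => measurable_from_top) (.of_forall fun i => .of_forall (h_bound i))
      (by rwa [lintegral_count]) (.of_forall h_lim)

end ENNReal

theorem Dense.exists_mem_enorm_sub_mul_lt {E : Type*} [SeminormedAddCommGroup E] {S : Set E}
    (hS : Dense S) (h0 : 0 ∈ S) {z : E} {a δ : ℝ≥0∞} (hza : ‖z‖ₑ * a ≠ ∞) (hδ : 0 < δ) :
    ∃ c ∈ S, ‖z - c‖ₑ * a < δ := by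
  rcases eq_or_ne ‖z‖ₑ 0 with hz | hz
  · exact ⟨0, h0, by simpa [hz] using hδ⟩
  have ha : a ≠ ∞ := fun ha => hza (by simp [ha, hz])
  obtain ⟨c, hcS, hc⟩ := EMetric.mem_closure_iff.mp (hS z) (δ / a) (ENNReal.div_pos hδ.ne' ha)
  exact ⟨c, hcS, ENNReal.mul_lt_of_lt_div (by rwa [edist_eq_enorm_sub] at hc)⟩

def sumsOfSingles {E : Type*} [AddCommMonoid E] (S : Set E) : Set (ℕ → E) :=
  {d | ∃ (N : ℕ) (c : ℕ → E), (∀ k, c k ∈ S) ∧ d = ∑ k ∈ Finset.range N, Pi.single k (c k)}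

theorem Set.Countable.sumsOfSingles {E : Type*} [AddCommMonoid E] {S : Set E}
    (hS : S.Countable) : (sumsOfSingles S).Countable := by
  have := hS.to_subtype
  refine (Set.countable_iUnion fun N =>
    Set.countable_range fun v : Fin N → S => ∑ k : Fin N, Pi.single (k : ℕ) (v k : E)).mono ?_
  rintro _ ⟨N, c, hc, rfl⟩
  exact Set.mem_iUnion.mpr ⟨N, fun k => ⟨c k, hc k⟩,
    Fin.sum_univ_eq_sum_range (fun k => Pi.single k (c k)) N⟩

section eNorm

variable {m : ℕ → ℕ → ℂ} {p : ℝ}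

noncomputable def colNorm (m : ℕ → ℕ → ℂ) (p : ℝ) (k : ℕ) : ℝ≥0∞ :=
  (∑' n, ‖m n k‖ₑ ^ p) ^ (1 / p)

theorem eNorm_eq_tsum (x : ℕ → ℂ) :
    eNorm m p x = (∑' n, (∑' k, ‖m n k‖ₑ * ‖x k‖ₑ) ^ p) ^ (1 / p) :=
  rfl

theorem eNorm_mono (hp : 0 ≤ p) {x y : ℕ → ℂ} (h : ∀ k, ‖x k‖ ≤ ‖y k‖) :
    eNorm m p x ≤ eNorm m p y := by
  simp only [eNorm_eq_tsum]
  gcongr with n k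
  exact enorm_le_iff_norm_le.mpr (h k)

theorem eNorm_zero (hp : 0 < p) : eNorm m p 0 = 0 := by
  simp [eNorm, ENNReal.zero_rpow_of_pos hp, hp]

theorem eNorm_neg (x : ℕ → ℂ) : eNorm m p (-x) = eNorm m p x := by
  simp [eNorm]

theorem eNorm_add_le (hp : 1 ≤ p) (x y : ℕ → ℂ) :
    eNorm m p (x + y) ≤ eNorm m p x + eNorm m p y := by
  simp only [eNorm_eq_tsum]
  refine le_trans ?_ (ENNReal.Lp_add_le_tsum hp _ _)
  simp only [← ENNReal.tsum_add, ← mul_add]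
  gcongr with n k
  exact enorm_add_le (x k) (y k)

theorem eNorm_sub_le (hp : 1 ≤ p) (x y : ℕ → ℂ) :
    eNorm m p (x - y) ≤ eNorm m p x + eNorm m p y := by
  simpa only [sub_eq_add_neg, eNorm_neg] using eNorm_add_le hp x (-y)

theorem eNorm_single (hp : 0 < p) (k : ℕ) (c : ℂ) :
    eNorm m p (Pi.single k c) = ‖c‖ₑ * colNorm m p k := by
  have hrow (n : ℕ) :
      ∑' j, ‖m n j‖ₑ * ‖Pi.single (M := fun _ => ℂ) k c j‖ₑ = ‖m n k‖ₑ * ‖c‖ₑ := by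
    rw [tsum_eq_single k fun j hj => by simp [hj]]
    simp
  simp only [eNorm_eq_tsum, hrow, ENNReal.mul_rpow_of_nonneg _ _ hp.le, ENNReal.tsum_mul_right,
    colNorm]
  rw [ENNReal.mul_rpow_of_nonneg _ _ (by positivity), ← ENNReal.rpow_mul,
    mul_one_div_cancel hp.ne', ENNReal.rpow_one, mul_comm]

theorem enorm_mul_colNorm_le_eNorm (hp : 0 < p) (x : ℕ → ℂ) (k : ℕ) :
    ‖x k‖ₑ * colNorm m p k ≤ eNorm m p x := by
  rw [← eNorm_single hp]
  refine eNorm_mono hp.le fun j => ?_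
  rcases eq_or_ne j k with rfl | hj
  · simp
  · simp [hj]

theorem eNorm_sum_single_le (hp : 1 ≤ p) (s : Finset ℕ) (c : ℕ → ℂ) :
    eNorm m p (∑ k ∈ s, Pi.single k (c k)) ≤ ∑ k ∈ s, ‖c k‖ₑ * colNorm m p k := by
  have hp0 : 0 < p := zero_lt_one.trans_le hp
  simpa only [eNorm_single hp0] using
    Finset.le_sum_of_subadditive (eNorm m p) (eNorm_zero hp0).le (eNorm_add_le hp) s
      fun k => Pi.single k (c k)

theorem tendsto_eNorm_of_dominated (hp : 0 < p) {ι : Type*} {l : Filter ι}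
    [l.IsCountablyGenerated] {y : ι → ℕ → ℂ} {x : ℕ → ℂ} (hx : eNorm m p x ≠ ∞)
    (hyx : ∀ i k, ‖y i k‖ ≤ ‖x k‖) (hy : ∀ k, Tendsto (fun i => y i k) l (𝓝 0)) :
    Tendsto (fun i => eNorm m p (y i)) l (𝓝 0) := by
  have hsum : ∑' n, (∑' k, ‖m n k‖ₑ * ‖x k‖ₑ) ^ p ≠ ∞ := by
    rwa [eNorm_eq_tsum, Ne, ENNReal.rpow_eq_top_iff_of_pos (by positivity)] at hx
  have hrow (n : ℕ) : ∑' k, ‖m n k‖ₑ * ‖x k‖ₑ ≠ ∞ := by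
    rw [Ne, ← ENNReal.rpow_eq_top_iff_of_pos hp]
    exact ne_top_of_le_ne_top hsum (ENNReal.le_tsum n)
  have hdom (i : ι) (n k : ℕ) : ‖m n k‖ₑ * ‖y i k‖ₑ ≤ ‖m n k‖ₑ * ‖x k‖ₑ :=
    mul_le_mul_right (enorm_le_iff_norm_le.mpr (hyx i k)) _
  have hrow_lim (n : ℕ) : Tendsto (fun i => ∑' k, ‖m n k‖ₑ * ‖y i k‖ₑ) l (𝓝 0) := by
    simpa using ENNReal.tendsto_tsum_of_dominated_convergence (f := fun _ => 0) (hdom · n)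
      (hrow n) fun k => by
        simpa using ENNReal.Tendsto.const_mul (hy k).enorm (.inr (enorm_ne_top (x := m n k)))
  have hsum_lim := ENNReal.tendsto_tsum_of_dominated_convergence
    (fun i n => ENNReal.rpow_le_rpow (ENNReal.tsum_le_tsum (hdom i n)) hp.le)
    hsum fun n => (hrow_lim n).ennrpow_const p
  simpa [eNorm_eq_tsum, ENNReal.zero_rpow_of_pos, hp] using hsum_lim.ennrpow_const (1 / p)

theorem tendsto_eNorm_sub_sum_single (hp : 0 < p) {x : ℕ → ℂ} (hx : eNorm m p x ≠ ∞) :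
    Tendsto (fun N => eNorm m p (x - ∑ k ∈ Finset.range N, Pi.single k (x k))) atTop (𝓝 0) := by
  have htail (N k : ℕ) :
      (x - ∑ j ∈ Finset.range N, Pi.single j (x j)) k = if k < N then 0 else x k := by
    simp only [Pi.sub_apply, Finset.sum_apply, Pi.single_apply, Finset.sum_ite_eq,
      Finset.mem_range]
    split_ifs <;> simp
  refine tendsto_eNorm_of_dominated hp hx (fun N k => ?_) (fun k => ?_)
  · rw [htail]; split_ifs <;> simp
  · refine tendsto_const_nhds.congr' ?_
    filter_upwards [eventually_gt_atTop k] with N hN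
    simp [htail, hN]

theorem exists_mem_sumsOfSingles_eNorm_sub_lt (hp : 1 ≤ p) {S : Set ℂ} (hS : Dense S)
    (h0 : 0 ∈ S) {x : ℕ → ℂ} (hx : eNorm m p x < ∞) {ε : ℝ≥0∞} (hε : 0 < ε) :
    ∃ d ∈ sumsOfSingles S, eNorm m p (x - d) < ε := by
  have hp0 : 0 < p := zero_lt_one.trans_le hp
  obtain ⟨N, hN⟩ := ((tendsto_eNorm_sub_sum_single hp0 hx.ne).eventually_lt_const
    (ENNReal.half_pos hε.ne')).exists
  obtain ⟨δ, hδ_pos, hδ_sum⟩ :=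
    ENNReal.exists_pos_sum_of_countable' (ENNReal.half_pos hε.ne').ne' ℕ
  choose c hcS hc using fun k => hS.exists_mem_enorm_sub_mul_lt h0
    (enorm_mul_colNorm_le_eNorm hp0 x k |>.trans_lt hx).ne (hδ_pos k)
  refine ⟨∑ k ∈ Finset.range N, Pi.single k (c k), ⟨N, c, hcS, rfl⟩, ?_⟩
  calc eNorm m p (x - ∑ k ∈ Finset.range N, Pi.single k (c k))
      = eNorm m p ((x - ∑ k ∈ Finset.range N, Pi.single k (x k)) +
          ∑ k ∈ Finset.range N, Pi.single k (x k - c k)) := by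
        simp only [Pi.single_sub, Finset.sum_sub_distrib, sub_add_sub_cancel]
    _ ≤ eNorm m p (x - ∑ k ∈ Finset.range N, Pi.single k (x k)) +
          ∑ k ∈ Finset.range N, ‖x k - c k‖ₑ * colNorm m p k :=
        (eNorm_add_le hp _ _).trans (by gcongr; exact eNorm_sum_single_le hp _ _)
    _ < ε / 2 + ε / 2 := by
        refine ENNReal.add_lt_add hN ?_
        calc ∑ k ∈ Finset.range N, ‖x k - c k‖ₑ * colNorm m p k
            ≤ ∑ k ∈ Finset.range N, δ k := Finset.sum_le_sum fun k _ => (hc k).le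
          _ ≤ ∑' k, δ k := ENNReal.sum_le_tsum _
          _ < ε / 2 := hδ_sum
    _ = ε := ENNReal.add_halves ε

end eNorm

theorem stmt2_general (m : ℕ → ℕ → ℂ) (p : ℝ) (hp : 1 ≤ p) :
    ∃ D : Set (ℕ → ℂ), D.Countable ∧ (∀ d ∈ D, eNorm m p d < ∞) ∧
      ∀ x : ℕ → ℂ, eNorm m p x < ∞ → ∀ ε : ℝ≥0∞, 0 < ε →
        ∃ d ∈ D, eNorm m p (x - d) < ε := by
  obtain ⟨S, hS_count, hS_dense⟩ := TopologicalSpace.exists_countable_dense ℂ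
  refine ⟨{d | d ∈ sumsOfSingles (insert 0 S) ∧ eNorm m p d < ∞},
    (hS_count.insert 0).sumsOfSingles.mono fun _ hd => hd.1, fun _ hd => hd.2, ?_⟩
  intro x hx ε hε
  obtain ⟨d, hd, hxd⟩ := exists_mem_sumsOfSingles_eNorm_sub_lt hp
    (hS_dense.mono (Set.subset_insert 0 S)) (Set.mem_insert 0 S) hx hε
  refine ⟨d, ⟨hd, ?_⟩, hxd⟩
  calc eNorm m p d = eNorm m p (x - (x - d)) := by rw [sub_sub_cancel]
    _ ≤ eNorm m p x + eNorm m p (x - d) := eNorm_sub_le hp _ _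
    _ < ∞ := ENNReal.add_lt_top.mpr ⟨hx, hxd.trans_le le_top⟩

/-- `(ℓ^p_M, ‖·‖_{M,p})` is separable: there is a countable subset of `ℓ^p_M`
which is dense in `ℓ^p_M` for the norm `‖·‖_{M,p}`. -/
theorem stmt2 (m : ℕ → ℕ → ℂ) (p : ℝ) (hp : 1 ≤ p)
    (hcol : ∀ k : ℕ, ∃ n : ℕ, m n k ≠ 0) :
    ∃ D : Set (ℕ → ℂ), D.Countable ∧ (∀ d ∈ D, eNorm m p d < ∞) ∧
      ∀ x : ℕ → ℂ, eNorm m p x < ∞ → ∀ ε : ℝ≥0∞, 0 < ε →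
        ∃ d ∈ D, eNorm m p (x - d) < ε :=
  stmt2_general m p hp
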